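/- Weak head reduction of a well-typed μ-redex guarded by a constant is productive: if e = λα₁…λαₙ.κ e₁…eₘ is in head normal form and u₁,…,uₙ are weak-head-normalizing terms, then (μα.e) u₁ … uₙ weak-head-reduces in finitely many steps to a term with head constant κ (and in particular weak head reduction of this application terminates). -/
import Mathlib


abbrev Var := String
abbrev FSym := String

/-- First-order applicative terms `t ::= x | K t₁ … tₙ`. -/
inductive Tm where
  | var : Var → Tm
  | node : FSym → List Tm → Tm

/-- Substitutions map term variables to terms. -/
abbrev Sb := Var → Tm

def Tm.subst (σ : Sb) : Tm → Tm
  | .var x => σ x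
  | .node k ts => .node k (ts.attach.map fun t => Tm.subst σ t.1)
decreasing_by all_goals (have := List.sizeOf_lt_of_mem t.2; simp_all; omega)

inductive Tm.HasVar : Tm → Var → Prop where
  | var : Tm.HasVar (.var x) x
  | node : t ∈ ts → Tm.HasVar t x → Tm.HasVar (.node k ts) x

inductive Tm.HasConst : Tm → FSym → Prop where
  | head : Tm.HasConst (.node c ts) c
  | arg : t ∈ ts → Tm.HasConst t c → Tm.HasConst (.node k ts) c

def Tm.fvList : Tm → List Var
  | .var x => [x]
  | .node _ ts => ts.attach.flatMap fun t => Tm.fvList t.1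
decreasing_by all_goals (have := List.sizeOf_lt_of_mem t.2; simp_all; omega)

/-- The multiset `Σ(t) ∪ FVar(t)` of function-symbol (inl) and variable (inr) occurrences. -/
def Tm.symbols : Tm → Multiset (FSym ⊕ Var)
  | .var x => {Sum.inr x}
  | .node k ts => Sum.inl k ::ₘ ((ts.attach.map fun t => Tm.symbols t.1).sum)
decreasing_by all_goals (have := List.sizeOf_lt_of_mem t.2; simp_all; omega)

def Sb.comp (σ τ : Sb) : Sb := fun x => (τ x).subst σ

def Sb.pow (σ : Sb) : ℕ → Sb
  | 0 => Tm.var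
  | n + 1 => Sb.comp σ (Sb.pow σ n)
/-- Atomic formulas `P t₁ … tₙ`. -/
structure Atm where
  pred : FSym
  args : List Tm

def Atm.subst (σ : Sb) (A : Atm) : Atm := ⟨A.pred, A.args.map (Tm.subst σ)⟩
def Atm.HasVar (A : Atm) (x : Var) : Prop := ∃ t ∈ A.args, t.HasVar x
def Atm.HasConst (A : Atm) (c : FSym) : Prop := ∃ t ∈ A.args, t.HasConst c
def Atm.fvList (A : Atm) : List Var := A.args.flatMap Tm.fvList
def Atm.symbols (A : Atm) : Multiset (FSym ⊕ Var) := (A.args.map Tm.symbols).sum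

/-- A Horn clause `B₁, …, Bₙ ⇒ A` with body `Bᵢ` and head `A`. -/
structure Cl where
  body : List Atm
  head : Atm

/-- Horn formulas have no existential variables: every variable of the body occurs in the head. -/
def Cl.Wf (c : Cl) : Prop := ∀ B ∈ c.body, ∀ x, B.HasVar x → c.head.HasVar x

/-- An axiom environment: Horn clauses labelled by distinct evidence constants κ. -/
def EnvWf (Φ : List (FSym × Cl)) : Prop :=
  (∀ p ∈ Φ, p.2.Wf) ∧ (Φ.map Prod.fst).Nodup

/-- Paterson's condition for a clause. -/
def Cl.Paterson (c : Cl) : Prop := ∀ B ∈ c.body, B.symbols < c.head.symbols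

/-- (Extended) mixed terms `q ::= A | κ | α | λα.q | μα.q | q q'`, together with
numbered holes so that the same syntax also serves as (multi-hole) mixed-term contexts. -/
inductive Mx where
  | atom : Atm → Mx
  | kappa : FSym → Mx
  | evar : Var → Mx
  | lam : Var → Mx → Mx
  | mu : Var → Mx → Mx
  | app : Mx → Mx → Mx
  | hole : ℕ → Mx

/-- `e e₁ … eₙ`. -/
def appsMx (e : Mx) (es : List Mx) : Mx := es.foldl .app e

/-- `λα₁…λαₙ.e`. -/
def lamList (as : List Var) (e : Mx) : Mx := as.foldr .lam e

/-- The list of atomic formulas occurring in a mixed term (or context): `|C|`. -/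
def Mx.atoms : Mx → List Atm
  | .atom A => [A]
  | .app q r => q.atoms ++ r.atoms
  | .lam _ q => q.atoms
  | .mu _ q => q.atoms
  | _ => []

/-- Fill the holes of a context. -/
def Mx.fill (f : ℕ → Mx) : Mx → Mx
  | .hole i => f i
  | .app q r => .app (q.fill f) (r.fill f)
  | .lam a q => .lam a (q.fill f)
  | .mu a q => .mu a (q.fill f)
  | q => q

/-- Fill all holes of a context with the same mixed term (single-hole case `C[q]`). -/
def Mx.fill1 (C q : Mx) : Mx := C.fill (fun _ => q)

/-- Contexts `C ::= • | C q | q C` built from application only. -/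
inductive IsAppCtx : Mx → Prop where
  | hole : IsAppCtx (.hole n)
  | appL : IsAppCtx C → IsAppCtx (.app C q)
  | appR : IsAppCtx C → IsAppCtx (.app q C)

/-- Apply a term substitution inside the atoms of a mixed term. -/
def Mx.tsubst (σ : Sb) : Mx → Mx
  | .atom A => .atom (A.subst σ)
  | .app q r => .app (q.tsubst σ) (r.tsubst σ)
  | .lam a q => .lam a (q.tsubst σ)
  | .mu a q => .mu a (q.tsubst σ)
  | q => q

/-- Substitute evidence `s` for the evidence variable `α` (capture-naive). -/
def Mx.esubst (a : Var) (s : Mx) : Mx → Mx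
  | .evar b => if b = a then s else .evar b
  | .lam b q => if b = a then .lam b q else .lam b (Mx.esubst a s q)
  | .mu b q => if b = a then .mu b q else .mu b (Mx.esubst a s q)
  | .app q r => .app (Mx.esubst a s q) (Mx.esubst a s r)
  | q => q

/-- Pure (first-order) evidence terms `e ::= κ | e e'`. -/
inductive IsEvidence : Mx → Prop where
  | kappa : IsEvidence (.kappa k)
  | app : IsEvidence q → IsEvidence r → IsEvidence (.app q r)

inductive IsSpine : Mx → Prop where
  | kappa : IsSpine (.kappa k)
  | app : IsSpine q → IsSpine (.app q r)

/-- Head normal forms `λα₁…λαₙ.κ e₁…eₘ`. -/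
inductive IsHNF : Mx → Prop where
  | spine : IsSpine q → IsHNF q
  | lam : IsHNF q → IsHNF (.lam a q)

/-- Terms whose head constant is `κ`: `κ e₁ … eₘ`. -/
inductive HeadK (k : FSym) : Mx → Prop where
  | kappa : HeadK k (.kappa k)
  | app : HeadK k q → HeadK k (.app q r)

def Mx.IsRedex : Mx → Prop
  | .mu _ _ => True
  | .app (.lam _ _) _ => True
  | _ => False

def Mx.IsName : Mx → Prop
  | .kappa _ => True
  | .evar _ => True
  | _ => False
/-- Big-step resolution with evidence: `Φ ⊢ A ⇓ e`. -/
inductive BigStep (Φ : List (FSym × Cl)) : Atm → Mx → Prop where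
  | res : ∀ (κ : FSym) (c : Cl) (σ : Sb) (es : List Mx),
      (κ, c) ∈ Φ →
      es.length = c.body.length →
      (∀ i (h : i < c.body.length) (h' : i < es.length),
        BigStep Φ (Atm.subst σ (c.body.get ⟨i, h⟩)) (es.get ⟨i, h'⟩)) →
      BigStep Φ (Atm.subst σ c.head) (appsMx (.kappa κ) es)

/-- Small-step resolution `Φ ⊢ C[σA] → C[κ (σB₁) … (σBₙ)]`, with contexts `C ::= • | C q | q C`. -/
inductive Step (Φ : List (FSym × Cl)) : Mx → Mx → Prop where
  | res : ∀ (κ : FSym) (c : Cl) (σ : Sb),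
      (κ, c) ∈ Φ →
      Step Φ (.atom (c.head.subst σ)) (appsMx (.kappa κ) (c.body.map fun B => .atom (B.subst σ)))
  | appL : Step Φ q q' → Step Φ (.app q r) (.app q' r)
  | appR : Step Φ r r' → Step Φ (.app q r) (.app q r')

/-- Weak head evidence reduction (contexts `C ::= • | C e`). -/
inductive WH : Mx → Mx → Prop where
  | beta : WH (.app (.lam a e) e') (Mx.esubst a e' e)
  | mu : WH (.mu a e) (Mx.esubst a (.mu a e) e)
  | appL : WH e e'' → WH (.app e e') (.app e'' e')

/-- Termination of weak head reduction from `e`. -/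
def WHTerminates (e : Mx) : Prop := Acc (fun x y => WH y x) e

/-- Small-step evidence reduction on mixed terms; only outermost redexes are contracted. -/
inductive EStep : Mx → Mx → Prop where
  | beta : EStep (.app (.lam a q) r) (Mx.esubst a r q)
  | mu : EStep (.mu a q) (Mx.esubst a (.mu a q) q)
  | appL : ¬ (Mx.app q r).IsRedex → EStep q q' → EStep (.app q r) (.app q' r)
  | appR : ¬ (Mx.app q r).IsRedex → EStep r r' → EStep (.app q r) (.app q r')

/-- Formulas `F ::= A | F ⇒ F' | ∀x.F`. -/
inductive Fm where
  | atom : Atm → Fm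
  | imp : Fm → Fm → Fm
  | all : Var → Fm → Fm

/-- `∀x₁…∀xₙ.F`. -/
def Fm.alls (xs : List Var) (F : Fm) : Fm := xs.foldr .all F

/-- The Horn formula `B₁, …, Bₙ ⇒ A` as a formula. -/
def hornFm (Bs : List Atm) (A : Atm) : Fm :=
  Bs.foldr (fun B F => .imp (.atom B) F) (.atom A)

def Fm.substF (γ : Sb) : Fm → Fm
  | .atom A => .atom (A.subst γ)
  | .imp F G => .imp (F.substF γ) (G.substF γ)
  | .all x F => .all x (F.substF fun y => if y = x then Tm.var y else γ y)

/-- `[t/x]F`. -/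
def Fm.substT (x : Var) (t : Tm) (F : Fm) : Fm :=
  F.substF fun y => if y = x then t else Tm.var y

inductive Fm.HasFV : Fm → Var → Prop where
  | atom : A.HasVar x → Fm.HasFV (.atom A) x
  | impL : Fm.HasFV F x → Fm.HasFV (.imp F G) x
  | impR : Fm.HasFV G x → Fm.HasFV (.imp F G) x
  | all : Fm.HasFV F x → x ≠ y → Fm.HasFV (.all y F) x

inductive Fm.HasConst : Fm → FSym → Prop where
  | atom : A.HasConst c → Fm.HasConst (.atom A) c
  | impL : Fm.HasConst F c → Fm.HasConst (.imp F G) c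
  | impR : Fm.HasConst G c → Fm.HasConst (.imp F G) c
  | all : Fm.HasConst F c → Fm.HasConst (.all y F) c

/-- Environments for corecursive resolution / Howard's type system:
formulas supported by arbitrary evidence. -/
abbrev Ctx := List (Mx × Fm)

/-- `c` is a fresh constant w.r.t. environment `Φ` and formula `F`. -/
def FreshConst (c : FSym) (Φ : Ctx) (F : Fm) : Prop :=
  ¬ F.HasConst c ∧ ∀ p ∈ Φ, ¬ p.2.HasConst c

/-- `γ` instantiates exactly the free variables of `F` with fresh term constants (eigenvariables). -/
def Eigen (γ : Sb) (Φ : Ctx) (F : Fm) : Prop :=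
  ∀ x, (F.HasFV x → ∃ c, γ x = Tm.node c [] ∧ FreshConst c Φ F) ∧
       (¬ F.HasFV x → γ x = Tm.var x)

/-- Corecursive resolution `Φ ⊢ F ⇓ e`. -/
inductive CoRes : Ctx → Fm → Mx → Prop where
  | res : ∀ (Φ : Ctx) (e : Mx) (xs : List Var) (Bs : List Atm) (A : Atm) (σ : Sb) (es : List Mx),
      (e, Fm.alls xs (hornFm Bs A)) ∈ Φ →
      es.length = Bs.length →
      (∀ i (h : i < Bs.length) (h' : i < es.length),
        CoRes Φ (.atom ((Bs.get ⟨i, h⟩).subst σ)) (es.get ⟨i, h'⟩)) →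
      CoRes Φ (.atom (A.subst σ)) (appsMx e es)
  | mu : ∀ (Φ : Ctx) (F : Fm) (a : Var) (e : Mx),
      CoRes ((.evar a, F) :: Φ) F e → IsHNF e → CoRes Φ F (.mu a e)
  | lam : ∀ (Φ : Ctx) (G B : Fm) (a : Var) (e : Mx) (γ : Sb),
      Eigen γ Φ (.imp G B) →
      CoRes ((.evar a, G.substF γ) :: Φ) (B.substF γ) e →
      CoRes Φ (.imp G B) (.lam a e)

/-- Howard's type system (with the guarded Mu rule). -/
inductive Typing : Ctx → Mx → Fm → Prop where
  | assump : (e, F) ∈ Φ → Typing Φ e F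
  | app : Typing Φ e₁ F' → Typing Φ e₂ (.imp F' F) → Typing Φ (.app e₂ e₁) F
  | abs : Typing ((.evar a, F') :: Φ) e F → Typing Φ (.lam a e) (.imp F' F)
  | gen : Typing Φ e F → (∀ p ∈ Φ, ¬ p.2.HasFV x) → Typing Φ e (.all x F)
  | inst : Typing Φ e (.all x F) → Typing Φ e (F.substT x t)
  | mu : Typing ((.evar a, F) :: Φ) e F → IsHNF e → Typing Φ (.mu a e) F

/-- Generalized resolution on sets of (environment, goal) pairs. -/
inductive GRStep : Multiset (Ctx × Fm) → Multiset (Ctx × Fm) → Prop where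
  | res : ∀ (S : Multiset (Ctx × Fm)) (Φ : Ctx) (a : Mx) (xs : List Var)
      (Gs : List Atm) (A : Atm) (σ : Sb),
      (a, Fm.alls xs (hornFm Gs A)) ∈ Φ →
      GRStep ((Φ, Fm.atom (A.subst σ)) ::ₘ S)
             (↑(Gs.map fun G => (Φ, Fm.atom (G.subst σ))) + S)
  | lam : ∀ (S : Multiset (Ctx × Fm)) (Φ : Ctx) (G B : Fm) (a : Var) (γ : Sb),
      Eigen γ Φ (.imp G B) →
      GRStep ((Φ, Fm.imp G B) ::ₘ S)
             (((((Mx.evar a, G.substF γ)) :: Φ, B.substF γ)) ::ₘ S)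
  | all : ∀ (S : Multiset (Ctx × Fm)) (Φ : Ctx) (x : Var) (F : Fm) (c : FSym),
      FreshConst c Φ (.all x F) →
      GRStep ((Φ, Fm.all x F) ::ₘ S) ((Φ, F.substT x (Tm.node c [])) ::ₘ S)

/-- A labelled Horn clause as a (universally closed) formula. -/
def Cl.toFm (c : Cl) : Fm :=
  Fm.alls c.head.fvList.dedup (hornFm c.body c.head)

/-- A Horn clause environment as a corecursive-resolution environment. -/
def toCtx (Φ : List (FSym × Cl)) : Ctx :=
  Φ.map fun p => (Mx.kappa p.1, p.2.toFm)

/-- `n`-fold nesting `C'ⁿ` of a context, with the substitution applied appropriately: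
`C'⁰ = •` and `C'ⁿ⁺¹ = (σⁿ C')[C'ⁿ]`. -/
def iterCtx (σ : Sb) (C : Mx) : ℕ → Mx
  | 0 => .hole 0
  | n + 1 => (C.tsubst (Sb.pow σ n)).fill1 (iterCtx σ C n)
mutual
/-- The least general anti-unifier `t ⊔ t'`, relative to an injective choice
function `φ` from pairs of terms to fresh variables. -/
def au (φ : Tm × Tm → Var) : Tm → Tm → Tm
  | .node k ts, .node k' ts' =>
      if k = k' ∧ ts.length = ts'.length then .node k (auList φ ts ts')
      else .var (φ (.node k ts, .node k' ts'))
  | t, t' => .var (φ (t, t'))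

def auList (φ : Tm × Tm → Var) : List Tm → List Tm → List Tm
  | t :: ts, t' :: ts' => au φ t t' :: auList φ ts ts'
  | _, _ => []
end

/-- The anti-unifier `P t₁ … tₙ ⊔ P t₁' … tₙ'` of two atomic formulas with the same predicate. -/
def auAtm (φ : Tm × Tm → Var) (A B : Atm) : Atm := ⟨A.pred, auList φ A.args B.args⟩

/-- Renaming of variables in a term. -/
def Tm.rename (ρ : Var → Var) (t : Tm) : Tm := t.subst fun x => Tm.var (ρ x)

def Atm.rename (ρ : Var → Var) (A : Atm) : Atm := A.subst fun x => Tm.var (ρ x)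


lemma headk_esubst {k : FSym} {a : Var} {s b : Mx} (h : HeadK k b) :
    HeadK k (Mx.esubst a s b) := by
  induction h with
  | kappa => simp only [Mx.esubst]; exact HeadK.kappa
  | app h ih => exact HeadK.app ih

lemma headk_no_wh {k : FSym} : ∀ {e : Mx}, HeadK k e → ∀ e', ¬ WH e e' := by
  intro e h
  induction h with
  | kappa => intro e' hw; cases hw
  | app h ih =>
    intro e' hw
    cases hw with
    | beta => cases h
    | appL hw' => exact ih _ hw'

lemma wh_det {e e₁ e₂ : Mx} (h1 : WH e e₁) : WH e e₂ → e₁ = e₂ := by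
  induction h1 generalizing e₂ with
  | beta =>
    intro h2
    cases h2 with
    | beta => rfl
    | appL hw => cases hw
  | mu => intro h2; cases h2; rfl
  | appL h ih =>
    intro h2
    cases h2 with
    | beta => cases h
    | appL hw => rw [ih hw]

lemma wh_apps : ∀ (us : List Mx) {q q' : Mx}, WH q q' →
    WH (appsMx q us) (appsMx q' us) := by
  intro us
  induction us with
  | nil => intro q q' h; exact h
  | cons u us ih => intro q q' h; exact ih (WH.appL h)

lemma esubst_lamList {k : FSym} (a : Var) (s : Mx) : ∀ (as : List Var) (b : Mx), HeadK k b →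
    ∃ b', Mx.esubst a s (lamList as b) = lamList as b' ∧ HeadK k b' := by
  intro as
  induction as with
  | nil => intro b hb; exact ⟨Mx.esubst a s b, rfl, headk_esubst hb⟩
  | cons a1 as ih =>
    intro b hb
    by_cases h : a1 = a
    · refine ⟨b, ?_, hb⟩
      simp [lamList, Mx.esubst, h]
    · obtain ⟨b', h1, h2⟩ := ih b hb
      refine ⟨b', ?_, h2⟩
      simp only [lamList] at h1 ⊢
      simp [Mx.esubst, h, h1]

lemma reduce_lams {k : FSym} : ∀ (as : List Var) (us : List Mx) (b : Mx),
    us.length = as.length → HeadK k b →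
    ∃ e', Relation.ReflTransGen WH (appsMx (lamList as b) us) e' ∧ HeadK k e' := by
  intro as
  induction as with
  | nil =>
    intro us b hlen hb
    have : us = [] := List.eq_nil_of_length_eq_zero hlen
    subst this
    exact ⟨b, .refl, hb⟩
  | cons a1 as ih =>
    intro us b hlen hb
    cases us with
    | nil => simp at hlen
    | cons u us =>
      simp at hlen
      obtain ⟨b', h1, h2⟩ := esubst_lamList a1 u as b hb
      obtain ⟨e', h3, h4⟩ := ih us b' hlen h2
      refine ⟨e', ?_, h4⟩
      have step : WH (appsMx (lamList (a1::as) b) (u::us)) (appsMx (lamList as b') us) := by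
        have hw : WH (Mx.app (.lam a1 (lamList as b)) u) (Mx.esubst a1 u (lamList as b)) :=
          WH.beta
        rw [h1] at hw
        exact wh_apps us hw
      exact Relation.ReflTransGen.head step h3

lemma term_of_headk {k : FSym} {e : Mx} (h : HeadK k e) : WHTerminates e :=
  Acc.intro e fun _ hw => absurd hw (headk_no_wh h _)

lemma term_back {e e' : Mx} (h : WH e e') (h' : WHTerminates e') : WHTerminates e :=
  Acc.intro e fun x hx => by rwa [wh_det hx h]

lemma term_rtc {e e' : Mx} (h : Relation.ReflTransGen WH e e') (h' : WHTerminates e') :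
    WHTerminates e := by
  induction h using Relation.ReflTransGen.head_induction_on with
  | refl => exact h'
  | head hstep _ ih => exact term_back hstep ih

/-- Productivity of guarded μ-redexes: if `e = λα₁…λαₙ.κ e₁…eₘ` is in head normal
form (with body spine headed by the constant `κ`) and `u₁,…,uₙ` are
weak-head-normalizing, then `(μα.e) u₁ … uₙ` weak-head-reduces in finitely many
steps to a term with head constant `κ`, and its weak head reduction terminates. -/
theorem guarded_mu_productive (k : FSym) (a : Var) (as : List Var) (b : Mx)
    (hb : HeadK k b) (us : List Mx) (hlen : us.length = as.length)
    (hus : ∀ u ∈ us, WHTerminates u) :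
    (∃ e' : Mx, Relation.ReflTransGen WH (appsMx (.mu a (lamList as b)) us) e' ∧ HeadK k e') ∧
    WHTerminates (appsMx (.mu a (lamList as b)) us) := by
  obtain ⟨b', h1, h2⟩ := esubst_lamList a (.mu a (lamList as b)) as b hb
  have mu_step : WH (Mx.mu a (lamList as b)) (lamList as b') := by
    have := WH.mu (a := a) (e := lamList as b)
    rwa [h1] at this
  have step1 := wh_apps us mu_step
  obtain ⟨e', h3, h4⟩ := reduce_lams as us b' hlen h2
  have hrt := Relation.ReflTransGen.head step1 h3
  exact ⟨⟨e', hrt, h4⟩, term_rtc hrt (term_of_headk h4)⟩
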